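/- arXiv:1601.02328 — 2 statements merged into one kernel-verified Lean document; each statement's English description precedes it below -/
import Mathlib

section
/- If C is an R-linear code of length n (an R-submodule of Rⁿ) with minimum Lee distance d_L, then its Gray image Φ(C) ⊆ (ZMod 2)^{3n} is an F₂-linear subspace of length 3n satisfying |Φ(C)| = |C|, and the minimum Hamming distance of Φ(C) equals d_L. -/
open Polynomial

set_option synthInstance.maxHeartbeats 1000000
set_option maxHeartbeats 1000000

noncomputable section

/-- The ring `R = F₂ + uF₂ + u²F₂` with `u³ = u`, realized as `(ZMod 2)[X] ⧸ ⟨X³ - X⟩`. -/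
abbrev R : Type := Polynomial (ZMod 2) ⧸ Ideal.span ({X ^ 3 - X} : Set (Polynomial (ZMod 2)))

/-- `u` is the residue class of `X` in `R`. -/
def u : R := Ideal.Quotient.mk _ (X : Polynomial (ZMod 2))

/-- The element `a + u·b + u²·c` of `R`. -/
def elt (a b c : ZMod 2) : R :=
  algebraMap (ZMod 2) R a + algebraMap (ZMod 2) R b * u + algebraMap (ZMod 2) R c * u ^ 2

/-- `Φ` is the Gray map: `Φ(a + u·b + u²·c) = (a, a + c, b)`. -/
def GraySpec (Φ : R → Fin 3 → ZMod 2) : Prop :=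
  ∀ a b c : ZMod 2, Φ (elt a b c) = ![a, a + c, b]

/-- The coordinatewise extension of the Gray map, `Rⁿ → (ZMod 2)^{3n}`. -/
def grayExt (Φ : R → Fin 3 → ZMod 2) (n : ℕ) (x : Fin n → R) :
    Fin n × Fin 3 → ZMod 2 :=
  fun p => Φ (x p.1) p.2

/-!
Every element of `R` is `a + ub + u²c` for unique `a, b, c ∈ F₂`, and in these coordinates the
Gray map is the `F₂`-linear bijection `(a, b, c) ↦ (a, a + c, b)`. Checking the eight elements of
`R` shows that it carries the Lee weight to the Hamming weight. Hence the coordinatewise Gray map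
is an injective additive isometry from `(Rⁿ, Lee)` to `(F₂³ⁿ, Hamming)`, so it maps the
`R`-submodule `C` onto an `F₂`-subspace of the same size and the same minimum distance.
-/

theorem hammingDist_uncurry {ι κ β : Type*} [Fintype ι] [Fintype κ] [DecidableEq β]
    (f g : ι → κ → β) :
    hammingDist (Function.uncurry f) (Function.uncurry g) = ∑ i, hammingDist (f i) (g i) := by
  simp only [hammingDist, Finset.card_filter, Fintype.sum_prod_type, Function.uncurry_apply_pair]
  rfl

theorem ZMod.eq_zero_or_eq_one_of_two (a : ZMod 2) : a = 0 ∨ a = 1 := by decide +revert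

theorem u_pow_three : u ^ 3 = u := by
  rw [← sub_eq_zero, u, ← map_pow, ← map_sub, Ideal.Quotient.eq_zero_iff_mem]
  exact Ideal.subset_span rfl

theorem elt_add (a b c a' b' c' : ZMod 2) :
    elt a b c + elt a' b' c' = elt (a + a') (b + b') (c + c') := by
  simp only [elt, map_add]
  ring

theorem elt_mul_u (a b c : ZMod 2) : elt a b c * u = elt 0 (a + c) b := by
  simp only [elt, map_zero, map_add]
  linear_combination algebraMap (ZMod 2) R c * u_pow_three

theorem exists_eq_elt (r : R) : ∃ a b c, r = elt a b c := by
  obtain ⟨p, rfl⟩ := Ideal.Quotient.mk_surjective r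
  induction p using Polynomial.induction_on with
  | C t => exact ⟨t, 0, 0, by simp only [elt, map_zero, zero_mul, add_zero]; rfl⟩
  | add p q hp hq =>
    obtain ⟨a, b, c, hp⟩ := hp
    obtain ⟨a', b', c', hq⟩ := hq
    exact ⟨a + a', b + b', c + c', by rw [map_add, hp, hq, elt_add]⟩
  | monomial k t ih =>
    obtain ⟨a, b, c, h⟩ := ih
    refine ⟨0, a + c, b, ?_⟩
    rw [pow_succ (X : (ZMod 2)[X]) k, ← mul_assoc, map_mul, h, ← elt_mul_u]
    rfl

namespace GraySpec

variable {Φ : R → Fin 3 → ZMod 2} (hΦ : GraySpec Φ)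
include hΦ

theorem map_add (r r' : R) : Φ (r + r') = Φ r + Φ r' := by
  obtain ⟨a, b, c, rfl⟩ := exists_eq_elt r
  obtain ⟨a', b', c', rfl⟩ := exists_eq_elt r'
  rw [elt_add, hΦ, hΦ, hΦ]
  ext i
  fin_cases i <;> simp [add_add_add_comm]

def addMonoidHom : R →+ (Fin 3 → ZMod 2) := AddMonoidHom.mk' Φ hΦ.map_add

theorem injective : Function.Injective Φ := by
  refine (injective_iff_map_eq_zero hΦ.addMonoidHom).2 fun r hr => ?_
  obtain ⟨a, b, c, rfl⟩ := exists_eq_elt r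
  change Φ _ = 0 at hr
  rw [hΦ] at hr
  have ha : a = 0 := congrFun hr 0
  have hb : b = 0 := congrFun hr 2
  have hc : c = 0 := by simpa [ha] using congrFun hr 1
  simp [ha, hb, hc, elt]

theorem hammingNorm_eq (wL : R → ℕ)
    (h0 : wL 0 = 0) (h1 : wL 1 = 2) (hu : wL u = 1) (hu2 : wL (u ^ 2) = 1)
    (h1u : wL (1 + u) = 3) (h1u2 : wL (1 + u ^ 2) = 1)
    (huu2 : wL (u + u ^ 2) = 2) (h1uu2 : wL (1 + u + u ^ 2) = 2) (r : R) :
    hammingNorm (Φ r) = wL r := by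
  obtain ⟨a, b, c, rfl⟩ := exists_eq_elt r
  rw [hΦ]
  rcases a.eq_zero_or_eq_one_of_two with rfl | rfl <;>
  rcases b.eq_zero_or_eq_one_of_two with rfl | rfl <;>
  rcases c.eq_zero_or_eq_one_of_two with rfl | rfl <;>
    simp [elt, h0, h1, hu, hu2, h1u, h1u2, huu2, h1uu2] <;> decide

theorem hammingDist_eq {wL : R → ℕ} (hw : ∀ r, hammingNorm (Φ r) = wL r) (r r' : R) :
    hammingDist (Φ r) (Φ r') = wL (r - r') := by
  rw [hammingDist_comm, hammingDist_eq_hammingNorm, neg_add_eq_sub, ← hw]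
  exact congrArg hammingNorm (hΦ.addMonoidHom.map_sub r r').symm

def grayExtHom (n : ℕ) : (Fin n → R) →+ (Fin n × Fin 3 → ZMod 2) :=
  AddMonoidHom.mk' (grayExt Φ n) fun _ _ => funext fun p => congrFun (hΦ.map_add _ _) p.2

theorem grayExt_injective (n : ℕ) : Function.Injective (grayExt Φ n) :=
  fun _ _ h => funext fun i => hΦ.injective <| funext fun j => congrFun h (i, j)

theorem hammingDist_grayExt {wL : R → ℕ} (hw : ∀ r, hammingNorm (Φ r) = wL r) {n : ℕ}
    (x y : Fin n → R) :
    hammingDist (grayExt Φ n x) (grayExt Φ n y) = ∑ i, wL (x i - y i) := by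
  simp only [← hΦ.hammingDist_eq hw]
  exact hammingDist_uncurry (fun i => Φ (x i)) (fun i => Φ (y i))

end GraySpec

theorem grayImage_of_linearCode_general (n : ℕ) (Φ : R → Fin 3 → ZMod 2) (hΦ : GraySpec Φ)
    (wL : R → ℕ)
    (h0 : wL 0 = 0) (h1 : wL 1 = 2) (hu : wL u = 1) (hu2 : wL (u ^ 2) = 1)
    (h1u : wL (1 + u) = 3) (h1u2 : wL (1 + u ^ 2) = 1)
    (huu2 : wL (u + u ^ 2) = 2) (h1uu2 : wL (1 + u + u ^ 2) = 2)
    (C : Submodule R (Fin n → R))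
    (dL : ℕ)
    (hdL : IsLeast {d : ℕ | ∃ c ∈ C, ∃ c' ∈ C, c ≠ c' ∧ d = ∑ i, wL (c i - c' i)} dL) :
    ∃ V : Submodule (ZMod 2) (Fin n × Fin 3 → ZMod 2),
      (V : Set (Fin n × Fin 3 → ZMod 2)) = grayExt Φ n '' (C : Set (Fin n → R)) ∧
      Nat.card (grayExt Φ n '' (C : Set (Fin n → R)) : Set (Fin n × Fin 3 → ZMod 2)) =
        Nat.card C ∧
      IsLeast {d : ℕ | ∃ v ∈ grayExt Φ n '' (C : Set (Fin n → R)),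
        ∃ v' ∈ grayExt Φ n '' (C : Set (Fin n → R)), v ≠ v' ∧ d = hammingDist v v'} dL := by
  have hw := hΦ.hammingNorm_eq wL h0 h1 hu hu2 h1u h1u2 huu2 h1uu2
  have hinj := hΦ.grayExt_injective n
  refine ⟨AddSubgroup.toZModSubmodule 2 (C.toAddSubgroup.map (hΦ.grayExtHom n)), rfl,
    Nat.card_image_of_injective hinj _, ?_⟩
  simpa only [Set.exists_mem_image, SetLike.mem_coe, hinj.ne_iff, hΦ.hammingDist_grayExt hw]
    using hdL

/-- If `C` is an `(n, k, d_L)` linear code over `R` then its Gray image `Φ(C)` is a binary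
linear code of length `3n` with `|Φ(C)| = |C|` whose minimum Hamming distance equals `d_L`. -/
theorem grayImage_of_linearCode (n : ℕ) (Φ : R → Fin 3 → ZMod 2) (hΦ : GraySpec Φ)
    (wL : R → ℕ)
    (h0 : wL 0 = 0) (h1 : wL 1 = 2) (hu : wL u = 1) (hu2 : wL (u ^ 2) = 1)
    (h1u : wL (1 + u) = 3) (h1u2 : wL (1 + u ^ 2) = 1)
    (huu2 : wL (u + u ^ 2) = 2) (h1uu2 : wL (1 + u + u ^ 2) = 2)
    (C : Submodule R (Fin n → R)) (hC : (C : Set (Fin n → R)).Nontrivial)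
    (dL : ℕ)
    (hdL : IsLeast {d : ℕ | ∃ c ∈ C, ∃ c' ∈ C, c ≠ c' ∧ d = ∑ i, wL (c i - c' i)} dL) :
    ∃ V : Submodule (ZMod 2) (Fin n × Fin 3 → ZMod 2),
      (V : Set (Fin n × Fin 3 → ZMod 2)) = grayExt Φ n '' (C : Set (Fin n → R)) ∧
      Nat.card (grayExt Φ n '' (C : Set (Fin n → R)) : Set (Fin n × Fin 3 → ZMod 2)) =
        Nat.card C ∧
      IsLeast {d : ℕ | ∃ v ∈ grayExt Φ n '' (C : Set (Fin n → R)),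
        ∃ v' ∈ grayExt Φ n '' (C : Set (Fin n → R)), v ≠ v' ∧ d = hammingDist v v'} dL :=
  grayImage_of_linearCode_general n Φ hΦ wL h0 h1 hu hu2 h1u h1u2 huu2 h1uu2 C dL hdL
end
end

section
/- Let n be an odd positive integer and let f₁, f₂, f₃ ∈ (ZMod 2)[Y] be monic polynomials with f₁·f₂·f₃ = Yⁿ - 1. Let S = (ZMod 2)[X] ⧸ ⟨X²⟩ with w the residue class of X, and let C = { c : Fin n → S | Σᵢ cᵢ·Yⁱ lies in the ideal of S[Y] generated by f₁·f₂, w·f₁·f₃, and Yⁿ - 1 } be the corresponding cyclic code of length n over S, with dual C^⊥ = { y : Fin n → S | Σᵢ cᵢ·yᵢ = 0 for all c ∈ C }. Then C is self-dual (C = C^⊥) if and only if f₁ = f̂₃ and f₂ = f̂₂, where f̂ denotes the reciprocal polynomial f̂(Y) = Y^{deg f}·f(1/Y). -/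
open Polynomial

noncomputable section

/-- The chain ring `S = F₂ + wF₂` with `w² = 0`, realized as `(ZMod 2)[X] ⧸ ⟨X²⟩`. -/
abbrev S : Type := Polynomial (ZMod 2) ⧸ Ideal.span ({X ^ 2} : Set (Polynomial (ZMod 2)))

/-- `w` is the residue class of `X` in `S`. -/
def w : S := Ideal.Quotient.mk _ (X : Polynomial (ZMod 2))

/-- The cyclic code `C = (f₁f₂, w·f₁f₃)` of length `n` over `S`: the coefficient vectors
`c ∈ Sⁿ` with `Σᵢ cᵢ·Yⁱ` in the ideal generated by `f₁f₂`, `w·f₁f₃` and `Yⁿ - 1`. -/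
def cyclicCodeS (n : ℕ) (f₁ f₂ f₃ : Polynomial (ZMod 2)) : Set (Fin n → S) :=
  {c | (∑ i : Fin n, C (c i) * X ^ (i : ℕ)) ∈
    Ideal.span ({(f₁ * f₂).map (algebraMap (ZMod 2) S),
      C w * (f₁ * f₃).map (algebraMap (ZMod 2) S),
      X ^ n - 1} : Set (Polynomial S))}

/-- The dual of a code of length `n` over a commutative ring `A`, with respect to the
standard inner product `Σᵢ cᵢyᵢ`. -/
def dualCode {A : Type*} [CommRing A] (n : ℕ) (D : Set (Fin n → A)) : Set (Fin n → A) :=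
  {y | ∀ c ∈ D, ∑ i, c i * y i = 0}

/-!
Every element of `S` is uniquely `x + w y` with `x, y ∈ 𝔽₂`, so vectors and polynomials over `S`
are pairs of binary ones, and the ideal defining `C` splits accordingly: `Yⁿ - 1` is separable
for odd `n`, so `f₂` and `f₃` are coprime and `C = C(f₁f₂) + w C(f₁)`, where `C(g)` is the binary
cyclic code generated by `g`. For binary codes `A ⊆ B` the dual of `A + wB` is `B^⊥ + wA^⊥`, and
the dual of `C(g)` with `gh = Yⁿ - 1` is `C(ĥ)`, because the inner product of two vectors is the
coefficient of `Y^(n-1)` in the product of the first polynomial with the reversal of the second.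
Hence `C^⊥ = C(f̂₂f̂₃) + w C(f̂₃)`, and since a monic divisor of `Yⁿ - 1` is determined by its
code, `C = C^⊥` exactly when `f₁f₂ = f̂₂f̂₃` and `f₁ = f̂₃`.
-/

namespace Polynomial

section Semiring

variable {R : Type*} [Semiring R]

theorem coeff_mul_eq_zero_of_coeff_eq_zero {u p : R[X]} {m N : ℕ}
    (hp : ∀ k, m ≤ k → k ≤ N → p.coeff k = 0) (hu : u.natDegree + m ≤ N) :
    (u * p).coeff N = 0 := by
  rw [coeff_mul]
  refine Finset.sum_eq_zero fun ⟨i, j⟩ hij => ?_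
  have hij : i + j = N := Finset.HasAntidiagonal.mem_antidiagonal.1 hij
  rcases le_or_gt i u.natDegree with hi | hi
  · rw [hp j (by omega) (by omega), mul_zero]
  · rw [coeff_eq_zero_of_natDegree_lt hi, zero_mul]

theorem reverse_reverse_of_coeff_zero_ne_zero {f : R[X]} (hf : f.coeff 0 ≠ 0) :
    f.reverse.reverse = f := by
  have hdeg : f.reverse.natDegree = f.natDegree := by
    rw [reverse_natDegree, natTrailingDegree_eq_zero.2 (Or.inr hf), Nat.sub_zero]
  rw [reverse, hdeg, reverse, reflect_reflect]

theorem reverse_monic_of_coeff_zero_eq_one {f : R[X]} (hf : f.coeff 0 = 1) :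
    f.reverse.Monic := by
  nontriviality R
  rw [Monic, reverse_leadingCoeff, trailingCoeff,
    natTrailingDegree_eq_zero.2 (Or.inr (hf ▸ one_ne_zero)), hf]

theorem reverse_dvd_reflect_of_dvd [NoZeroDivisors R] {f p : R[X]} {N : ℕ} (hfp : f ∣ p)
    (hp : p.natDegree ≤ N) : f.reverse ∣ reflect N p := by
  obtain ⟨q, rfl⟩ := hfp
  rcases eq_or_ne (f * q) 0 with h0 | h0
  · simp [h0]
  have hdeg := natDegree_mul (left_ne_zero_of_mul h0) (right_ne_zero_of_mul h0)
  have hN : N = f.natDegree + (N - f.natDegree) := by omega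
  rw [hN, reflect_mul f q le_rfl (by omega)]
  exact dvd_mul_right _ _

theorem dvd_reflect_iff [NoZeroDivisors R] {f p : R[X]} {N : ℕ} (hf : f.coeff 0 ≠ 0)
    (hp : p.natDegree ≤ N) : f ∣ reflect N p ↔ f.reverse ∣ p := by
  constructor
  · intro h
    simpa using reverse_dvd_reflect_of_dvd h ((natDegree_reflect_le).trans (max_le le_rfl hp))
  · intro h
    simpa [reverse_reverse_of_coeff_zero_ne_zero hf] using reverse_dvd_reflect_of_dvd h hp

end Semiring

section Ring

variable {R : Type*} [Ring R]

theorem coeff_X_pow_sub_one_mul {n k : ℕ} (hk : k < n) (r : R[X]) :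
    ((X ^ n - 1) * r).coeff k = -r.coeff k := by
  rw [sub_mul, one_mul, coeff_sub, coeff_X_pow_mul', if_neg (by omega), zero_sub]

theorem natDegree_X_pow_sub_one [Nontrivial R] (n : ℕ) : (X ^ n - 1 : R[X]).natDegree = n := by
  simpa using natDegree_X_pow_sub_C (n := n) (r := (1 : R))

theorem reverse_X_pow_sub_one [Nontrivial R] (n : ℕ) :
    (X ^ n - 1 : R[X]).reverse = 1 - X ^ n := by
  rw [reverse, natDegree_X_pow_sub_one, reflect_sub,
    reflect_monomial, reflect_one, revAt_le le_rfl, Nat.sub_self, pow_zero]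

theorem coeff_zero_ne_zero_of_dvd_X_pow_sub_one [Nontrivial R] {f : R[X]} {n : ℕ} (hn : 0 < n)
    (h : f ∣ X ^ n - 1) : f.coeff 0 ≠ 0 := by
  obtain ⟨q, hq⟩ := h
  have h0 := congrArg (coeff · 0) hq
  simp only [mul_coeff_zero, coeff_sub, coeff_X_pow, coeff_one_zero, if_neg hn.ne] at h0
  exact left_ne_zero_of_mul (by rw [← h0]; simp)

theorem reverse_dvd_X_pow_sub_one [IsDomain R] {f : R[X]} {n : ℕ} (h : f ∣ X ^ n - 1) :
    f.reverse ∣ X ^ n - 1 := by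
  obtain ⟨q, hq⟩ := h
  refine ⟨-q.reverse, ?_⟩
  rw [mul_neg, ← reverse_mul_of_domain, ← hq, reverse_X_pow_sub_one, neg_sub]

end Ring

section CommRing

variable {R : Type*} [CommRing R]

theorem dvd_iff_coeff_mul_eq_zero {g h y : R[X]} {n : ℕ} (hg : g.Monic)
    (hgh : g * h = X ^ n - 1) (hy : y.natDegree < n) :
    h ∣ y ↔ ∀ k, g.natDegree ≤ k → k < n → (g * y).coeff k = 0 := by
  nontriviality R
  have hh : h.Monic := hg.of_mul_monic_left (hgh ▸ leadingCoeff_X_pow_sub_one (by omega))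
  have hdeg : g.natDegree + h.natDegree = n := by
    rw [← hg.natDegree_mul hh, hgh, natDegree_X_pow_sub_one]
  have of_dvd : ∀ z, z.natDegree < n → h ∣ z →
      ∀ k, g.natDegree ≤ k → k < n → (g * z).coeff k = 0 := by
    rintro z hz ⟨q, rfl⟩ k hk hkn
    rw [← mul_assoc, hgh, coeff_X_pow_sub_one_mul hkn, neg_eq_zero]
    rcases eq_or_ne q 0 with rfl | hq
    · exact coeff_zero k
    rw [hh.natDegree_mul' hq] at hz
    exact coeff_eq_zero_of_natDegree_lt (by omega)
  refine ⟨of_dvd y hy, fun hcoeff => ?_⟩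
  rw [← modByMonic_eq_zero_iff_dvd hh]
  set r := y %ₘ h
  by_contra hr
  -- `g * r` has degree in `[deg g, n)`, where it agrees with `g * y`, so its leading coeff is 0
  have hrdeg : r.natDegree < h.natDegree := natDegree_lt_natDegree hr (degree_modByMonic_lt y hh)
  have hgr : (g * r).natDegree = g.natDegree + r.natDegree := hg.natDegree_mul' hr
  have hyr : h ∣ y - r := ⟨y /ₘ h, by rw [sub_eq_iff_eq_add', modByMonic_add_div]⟩
  have hlead := of_dvd (y - r) ((natDegree_sub_le y r).trans_lt (max_lt hy (by omega))) hyr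
    (g * r).natDegree (by omega) (by omega)
  rw [mul_sub, coeff_sub, hcoeff _ (by omega) (by omega), zero_sub, neg_eq_zero] at hlead
  exact hr ((hg.mul_right_eq_zero_iff).1 (leadingCoeff_eq_zero.1 hlead))

end CommRing

theorem sum_mul_eq_coeff_mul_reflect {R : Type*} [CommSemiring R] [DecidableEq R] {n : ℕ}
    (a x : Fin n → R) :
    ∑ i, a i * x i = (ofFn n a * reflect (n - 1) (ofFn n x)).coeff (n - 1) := by
  rcases n with _ | n
  · simp
  rw [coeff_mul, Finset.Nat.sum_antidiagonal_eq_sum_range_succ_mk, Nat.add_sub_cancel,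
    ← Fin.sum_univ_eq_sum_range]
  refine Finset.sum_congr rfl fun i _ => ?_
  rw [coeff_reflect, revAt_le (by omega), Nat.sub_sub_self (by omega),
    ofFn_coeff_eq_val_of_lt _ i.isLt, ofFn_coeff_eq_val_of_lt _ i.isLt]

theorem isCoprime_of_mul_dvd_X_pow_sub_one {K : Type*} [Field K] {f g : K[X]} {n : ℕ}
    (hn : (n : K) ≠ 0) (h : f * g ∣ X ^ n - 1) : IsCoprime f g :=
  ((X_pow_sub_one_separable_iff.2 hn).of_dvd h).isCoprime

end Polynomial

open Polynomial

section CyclicCode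

variable {R : Type*} [CommRing R] [DecidableEq R] {n : ℕ}

def cyclicCode (n : ℕ) (g : R[X]) : Set (Fin n → R) := {a | g ∣ ofFn n a}

theorem zero_mem_cyclicCode (g : R[X]) : (0 : Fin n → R) ∈ cyclicCode n g := by
  simp [cyclicCode]

theorem cyclicCode_subset_of_dvd {g g' : R[X]} (h : g' ∣ g) :
    cyclicCode n g ⊆ cyclicCode n g' :=
  fun _ ha => h.trans ha

variable [IsDomain R]

theorem dvd_of_cyclicCode_subset {g g' : R[X]} (hn : 0 < n) (hg : g.Monic)
    (hgX : g ∣ X ^ n - 1) (hg'X : g' ∣ X ^ n - 1) (h : cyclicCode n g ⊆ cyclicCode n g') :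
    g' ∣ g := by
  have hX : (X ^ n - 1 : R[X]).Monic := leadingCoeff_X_pow_sub_one hn
  rcases (natDegree_le_of_dvd hgX hX.ne_zero).lt_or_eq with hlt | heq
  · rw [natDegree_X_pow_sub_one] at hlt
    have hg_mem : toFn n g ∈ cyclicCode n g := by
      simp [cyclicCode, ofFn_comp_toFn_eq_id_of_natDegree_lt hlt]
    simpa [cyclicCode, ofFn_comp_toFn_eq_id_of_natDegree_lt hlt] using h hg_mem
  · rwa [← eq_of_monic_of_dvd_of_natDegree_le hg hX hgX heq.ge]

theorem cyclicCode_inj {g g' : R[X]} (hn : 0 < n) (hg : g.Monic) (hg' : g'.Monic)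
    (hgX : g ∣ X ^ n - 1) (hg'X : g' ∣ X ^ n - 1) :
    cyclicCode n g = cyclicCode n g' ↔ g = g' := by
  refine ⟨fun h => eq_of_monic_of_associated hg hg' (associated_of_dvd_dvd ?_ ?_),
    fun h => h ▸ rfl⟩
  · exact dvd_of_cyclicCode_subset hn hg' hg'X hgX h.ge
  · exact dvd_of_cyclicCode_subset hn hg hgX hg'X h.le

theorem mem_dualCode_cyclicCode_iff {g : R[X]} (hg : g ≠ 0) (x : Fin n → R) :
    x ∈ dualCode n (cyclicCode n g) ↔
      ∀ k, g.natDegree ≤ k → k < n → (g * reflect (n - 1) (ofFn n x)).coeff k = 0 := by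
  simp only [dualCode, cyclicCode, Set.mem_ofPred_eq]
  constructor
  · intro hx k hk hkn
    have hp : (X ^ (n - 1 - k) * g).natDegree < n := by
      rw [natDegree_X_pow_mul (n := n - 1 - k) hg]; omega
    have := hx (toFn n (X ^ (n - 1 - k) * g))
      (by rw [ofFn_comp_toFn_eq_id_of_natDegree_lt hp]; exact dvd_mul_left _ _)
    rwa [sum_mul_eq_coeff_mul_reflect, ofFn_comp_toFn_eq_id_of_natDegree_lt hp, mul_assoc,
      coeff_X_pow_mul', if_pos (by omega), Nat.sub_sub_self (by omega)] at this
  · rintro hcoeff a ⟨u, hu⟩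
    rw [sum_mul_eq_coeff_mul_reflect, hu, mul_comm g u, mul_assoc]
    rcases eq_or_ne u 0 with rfl | hu0
    · simp
    have ha : (ofFn n a).natDegree < n :=
      ofFn_natDegree_lt (Nat.one_le_iff_ne_zero.2 (ne_zero_of_ofFn_ne_zero
        (hu ▸ mul_ne_zero hg hu0))) a
    rw [hu, natDegree_mul hg hu0] at ha
    exact coeff_mul_eq_zero_of_coeff_eq_zero (fun k hk _ => hcoeff k hk (by omega)) (by omega)

theorem dualCode_cyclicCode {g h : R[X]} (hn : 0 < n) (hg : g.Monic)
    (hgh : g * h = X ^ n - 1) :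
    dualCode n (cyclicCode n g) = cyclicCode n h.reverse := by
  have hh0 := coeff_zero_ne_zero_of_dvd_X_pow_sub_one hn (Dvd.intro_left g hgh)
  ext x
  have hx : (ofFn n x).natDegree ≤ n - 1 := Nat.le_pred_of_lt (ofFn_natDegree_lt hn x)
  have hy : (reflect (n - 1) (ofFn n x)).natDegree < n :=
    natDegree_reflect_le.trans_lt (by omega)
  rw [mem_dualCode_cyclicCode_iff hg.ne_zero, ← dvd_iff_coeff_mul_eq_zero hg hgh hy,
    dvd_reflect_iff hh0 hx]
  rfl

end CyclicCode

theorem Ideal.span_mul_mul_eq_span_of_isCoprime {R : Type*} [CommRing R] {a b c m : R}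
    (hbc : IsCoprime b c) (hm : a ∣ m) : Ideal.span {a * b, a * c, m} = Ideal.span {a} := by
  refine le_antisymm (Ideal.span_le.2 ?_) (Ideal.span_singleton_le_iff_mem _ |>.2 ?_)
  · rintro x (rfl | rfl | rfl) <;> apply Ideal.mem_span_singleton.2
    exacts [dvd_mul_right _ _, dvd_mul_right _ _, hm]
  · obtain ⟨u, v, huv⟩ := hbc
    have ha : u * (a * b) + v * (a * c) = a := by linear_combination a * huv
    have hmem : u * (a * b) + v * (a * c) ∈ Ideal.span {a * b, a * c, m} :=
      Ideal.add_mem _ (Ideal.mul_mem_left _ _ (Ideal.subset_span (by simp)))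
        (Ideal.mul_mem_left _ _ (Ideal.subset_span (by simp)))
    rwa [ha] at hmem

theorem w_mul_self : w * w = 0 := by
  rw [w, ← map_mul, ← sq, Ideal.Quotient.eq_zero_iff_mem]
  exact Ideal.subset_span rfl

theorem mk_eq_mk_iff_coeff {p q : (ZMod 2)[X]} :
    (Ideal.Quotient.mk _ p : S) = Ideal.Quotient.mk _ q ↔
      p.coeff 0 = q.coeff 0 ∧ p.coeff 1 = q.coeff 1 := by
  rw [Ideal.Quotient.mk_eq_mk_iff_sub_mem, Ideal.mem_span_singleton, X_pow_dvd_iff]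
  simp only [coeff_sub, sub_eq_zero]
  exact ⟨fun h => ⟨h 0 (by norm_num), h 1 (by norm_num)⟩,
    fun ⟨h0, h1⟩ d hd => by interval_cases d <;> assumption⟩

def ofPair (x y : ZMod 2) : S := algebraMap (ZMod 2) S x + w * algebraMap (ZMod 2) S y

theorem ofPair_eq_mk (x y : ZMod 2) : ofPair x y = Ideal.Quotient.mk _ (C x + X * C y) := by
  simp only [ofPair, w, map_add, map_mul, ← Polynomial.algebraMap_eq,
    Ideal.Quotient.mk_algebraMap, mul_comm]

theorem ofPair_injective : Function.Injective2 ofPair := fun x x' y y' h => by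
  rw [ofPair_eq_mk, ofPair_eq_mk, mk_eq_mk_iff_coeff] at h
  simpa using h

theorem ofPair_surjective (s : S) : ∃ x y, ofPair x y = s := by
  obtain ⟨p, rfl⟩ := Ideal.Quotient.mk_surjective s
  exact ⟨p.coeff 0, p.coeff 1, by rw [ofPair_eq_mk, mk_eq_mk_iff_coeff]; simp⟩

theorem ofPair_eq_zero_iff {x y : ZMod 2} : ofPair x y = 0 ↔ x = 0 ∧ y = 0 := by
  rw [show (0 : S) = ofPair 0 0 by simp [ofPair], ofPair_injective.eq_iff]

theorem ofPair_mul (x y x' y' : ZMod 2) :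
    ofPair x y * ofPair x' y' = ofPair (x * x') (x * y' + y * x') := by
  simp only [ofPair, map_add, map_mul]
  linear_combination (algebraMap (ZMod 2) S y * algebraMap (ZMod 2) S y') * w_mul_self

theorem sum_ofPair {ι : Type*} (s : Finset ι) (f g : ι → ZMod 2) :
    ∑ i ∈ s, ofPair (f i) (g i) = ofPair (∑ i ∈ s, f i) (∑ i ∈ s, g i) := by
  simp only [ofPair, Finset.sum_add_distrib, map_sum, Finset.mul_sum]

def ofPairVec {n : ℕ} (a b : Fin n → ZMod 2) : Fin n → S := fun i => ofPair (a i) (b i)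

theorem ofPairVec_injective {n : ℕ} : Function.Injective2 (ofPairVec (n := n)) :=
  fun a a' b b' h => by
    have hi := fun i => ofPair_injective (congrFun h i)
    exact ⟨funext fun i => (hi i).1, funext fun i => (hi i).2⟩

theorem ofPairVec_surjective {n : ℕ} (c : Fin n → S) : ∃ a b, ofPairVec a b = c := by
  choose a b h using fun i => ofPair_surjective (c i)
  exact ⟨a, b, funext h⟩

theorem sum_ofPairVec_mul {n : ℕ} (a b a' b' : Fin n → ZMod 2) :
    ∑ i, ofPairVec a b i * ofPairVec a' b' i =
      ofPair (∑ i, a i * a' i) (∑ i, (a i * b' i + b i * a' i)) := by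
  simp only [ofPairVec, ofPair_mul, sum_ofPair]

def ofPairPoly (p q : (ZMod 2)[X]) : S[X] :=
  p.map (algebraMap (ZMod 2) S) + C w * q.map (algebraMap (ZMod 2) S)

theorem coeff_ofPairPoly (p q : (ZMod 2)[X]) (k : ℕ) :
    (ofPairPoly p q).coeff k = ofPair (p.coeff k) (q.coeff k) := by
  simp [ofPairPoly, ofPair]

theorem ofPairPoly_injective : Function.Injective2 ofPairPoly := fun p p' q q' h => by
  have hk (k : ℕ) : p.coeff k = p'.coeff k ∧ q.coeff k = q'.coeff k := by
    apply ofPair_injective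
    rw [← coeff_ofPairPoly, h, coeff_ofPairPoly]
  exact ⟨ext fun k => (hk k).1, ext fun k => (hk k).2⟩

theorem ofPairPoly_add (p q p' q' : (ZMod 2)[X]) :
    ofPairPoly p q + ofPairPoly p' q' = ofPairPoly (p + p') (q + q') := by
  simp only [ofPairPoly, Polynomial.map_add]
  ring

theorem ofPairPoly_mul (p q p' q' : (ZMod 2)[X]) :
    ofPairPoly p q * ofPairPoly p' q' = ofPairPoly (p * p') (p * q' + q * p') := by
  have hw : (C w : S[X]) * C w = 0 := by rw [← C_mul, w_mul_self, C_0]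
  simp only [ofPairPoly, Polynomial.map_mul, Polynomial.map_add]
  linear_combination (q.map (algebraMap (ZMod 2) S) * q'.map (algebraMap (ZMod 2) S)) * hw

theorem ofPairPoly_surjective (F : S[X]) : ∃ p q, ofPairPoly p q = F := by
  induction F using Polynomial.induction_on' with
  | add F G hF hG =>
    obtain ⟨p, q, rfl⟩ := hF
    obtain ⟨p', q', rfl⟩ := hG
    exact ⟨p + p', q + q', (ofPairPoly_add p q p' q').symm⟩
  | monomial k s =>
    obtain ⟨x, y, rfl⟩ := ofPair_surjective s
    refine ⟨monomial k x, monomial k y, ext fun i => ?_⟩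
    rw [coeff_ofPairPoly, coeff_monomial, coeff_monomial, coeff_monomial]
    split_ifs <;> simp [ofPair]

theorem sum_C_mul_X_pow_ofPairVec {n : ℕ} (a b : Fin n → ZMod 2) :
    ∑ i : Fin n, C (ofPairVec a b i) * X ^ (i : ℕ) = ofPairPoly (ofFn n a) (ofFn n b) := by
  simp only [ofPairPoly, ofFn_eq_sum_monomial, Polynomial.map_sum, Finset.mul_sum,
    ← Finset.sum_add_distrib]
  refine Finset.sum_congr rfl fun i _ => ?_
  simp only [ofPairVec, ofPair, ← C_mul_X_pow_eq_monomial, C_add, C_mul, Polynomial.map_mul,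
    Polynomial.map_pow, map_C, map_X]
  ring

theorem ofPairPoly_mem_span_iff {p q F G M : (ZMod 2)[X]} :
    ofPairPoly p q ∈ Ideal.span {ofPairPoly F 0, ofPairPoly 0 G, ofPairPoly M 0} ↔
      p ∈ Ideal.span {F, M} ∧ q ∈ Ideal.span {F, G, M} := by
  simp only [Ideal.span, Submodule.mem_span_pair, Submodule.mem_span_triple, smul_eq_mul]
  constructor
  · rintro ⟨α, β, γ, h⟩
    obtain ⟨α₀, α₁, rfl⟩ := ofPairPoly_surjective α
    obtain ⟨β₀, β₁, rfl⟩ := ofPairPoly_surjective β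
    obtain ⟨γ₀, γ₁, rfl⟩ := ofPairPoly_surjective γ
    simp only [ofPairPoly_mul, ofPairPoly_add, mul_zero, add_zero, zero_add] at h
    obtain ⟨rfl, rfl⟩ := ofPairPoly_injective h
    exact ⟨⟨α₀, γ₀, rfl⟩, ⟨α₁, β₀, γ₁, rfl⟩⟩
  · rintro ⟨⟨α₀, γ₀, rfl⟩, ⟨α₁, β₀, γ₁, rfl⟩⟩
    refine ⟨ofPairPoly α₀ α₁, ofPairPoly β₀ 0, ofPairPoly γ₀ γ₁, ?_⟩
    simp only [ofPairPoly_mul, ofPairPoly_add]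
    congr 1 <;> ring

section Codes

open Set

variable {n : ℕ}

theorem image2_ofPairVec_eq_iff {A B A' B' : Set (Fin n → ZMod 2)} (hA : 0 ∈ A) (hB : 0 ∈ B)
    (hA' : 0 ∈ A') (hB' : 0 ∈ B') :
    image2 ofPairVec A B = image2 ofPairVec A' B' ↔ A = A' ∧ B = B' := by
  refine ⟨fun h => ⟨ext fun a => ?_, ext fun b => ?_⟩, fun ⟨hA, hB⟩ => hA ▸ hB ▸ rfl⟩
  · simpa [mem_image2_iff ofPairVec_injective, hB, hB'] using congrArg (ofPairVec a 0 ∈ ·) h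
  · simpa [mem_image2_iff ofPairVec_injective, hA, hA'] using congrArg (ofPairVec 0 b ∈ ·) h

theorem dualCode_image2_ofPairVec {A B : Set (Fin n → ZMod 2)} (hAB : A ⊆ B) (hA : 0 ∈ A) :
    dualCode n (image2 ofPairVec A B) = image2 ofPairVec (dualCode n B) (dualCode n A) := by
  ext y
  obtain ⟨a', b', rfl⟩ := ofPairVec_surjective y
  simp only [mem_image2_iff ofPairVec_injective, dualCode, forall_mem_image2, sum_ofPairVec_mul,
    ofPair_eq_zero_iff, mem_ofPred_eq]
  constructor
  · intro h
    exact ⟨fun b hb => by simpa using (h 0 hA b hb).2,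
      fun a ha => by simpa using (h a ha 0 (hAB hA)).2⟩
  · rintro ⟨hB', hA'⟩ a ha b hb
    exact ⟨hB' a (hAB ha), by rw [Finset.sum_add_distrib, hA' a ha, hB' b hb, add_zero]⟩

theorem cyclicCodeS_eq_image2 {f₁ f₂ f₃ : (ZMod 2)[X]} (hprod : f₁ * f₂ * f₃ = X ^ n - 1)
    (hcop : IsCoprime f₂ f₃) :
    cyclicCodeS n f₁ f₂ f₃ = image2 ofPairVec (cyclicCode n (f₁ * f₂)) (cyclicCode n f₁) := by
  have hgen : ({(f₁ * f₂).map (algebraMap (ZMod 2) S),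
      C w * (f₁ * f₃).map (algebraMap (ZMod 2) S), X ^ n - 1} : Set S[X]) =
      {ofPairPoly (f₁ * f₂) 0, ofPairPoly 0 (f₁ * f₃), ofPairPoly (X ^ n - 1) 0} := by
    simp [ofPairPoly]
  have hspan₁ : Ideal.span {f₁ * f₂, X ^ n - 1} = Ideal.span {f₁ * f₂} :=
    Ideal.span_pair_eq_span_left_iff_dvd.2 ⟨f₃, hprod.symm⟩
  have hspan₂ : Ideal.span {f₁ * f₂, f₁ * f₃, X ^ n - 1} = Ideal.span {f₁} :=
    Ideal.span_mul_mul_eq_span_of_isCoprime hcop ⟨f₂ * f₃, by rw [← hprod, mul_assoc]⟩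
  ext c
  obtain ⟨a, b, rfl⟩ := ofPairVec_surjective c
  rw [mem_image2_iff ofPairVec_injective, cyclicCodeS, mem_ofPred_eq, sum_C_mul_X_pow_ofPairVec,
    hgen, ofPairPoly_mem_span_iff, hspan₁, hspan₂, Ideal.mem_span_singleton,
    Ideal.mem_span_singleton]
  rfl

theorem reverse_monic_of_dvd_X_pow_sub_one {f : (ZMod 2)[X]} (hn : 0 < n)
    (h : f ∣ X ^ n - 1) : f.reverse.Monic := by
  have h0 := coeff_zero_ne_zero_of_dvd_X_pow_sub_one hn h
  exact reverse_monic_of_coeff_zero_eq_one (Fin.eq_one_of_ne_zero _ h0)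

end Codes

theorem selfDual_iff_reciprocal_general (n : ℕ) (hodd : Odd n) (hpos : 0 < n)
    (f₁ f₂ f₃ : Polynomial (ZMod 2))
    (h₁ : f₁.Monic) (h₂ : f₂.Monic)
    (hprod : f₁ * f₂ * f₃ = X ^ n - 1) :
    cyclicCodeS n f₁ f₂ f₃ = dualCode n (cyclicCodeS n f₁ f₂ f₃) ↔
      f₁ = f₃.reverse ∧ f₂ = f₂.reverse := by
  have hprod' : f₁ * (f₂ * f₃) = X ^ n - 1 := by rw [← hprod, mul_assoc]
  have hcop : IsCoprime f₂ f₃ := isCoprime_of_mul_dvd_X_pow_sub_one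
    (ZMod.natCast_ne_zero_iff_odd.2 hodd) (Dvd.intro_left f₁ hprod')
  have hcode := cyclicCodeS_eq_image2 hprod hcop
  have hdual : dualCode n (cyclicCodeS n f₁ f₂ f₃) =
      Set.image2 ofPairVec (cyclicCode n (f₂ * f₃).reverse) (cyclicCode n f₃.reverse) := by
    rw [hcode, dualCode_image2_ofPairVec (cyclicCode_subset_of_dvd (dvd_mul_right _ _))
      (zero_mem_cyclicCode _), dualCode_cyclicCode hpos h₁ hprod',
      dualCode_cyclicCode hpos (h₁.mul h₂) hprod]
  have hdvd₃ : f₃ ∣ X ^ n - 1 := Dvd.intro_left _ hprod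
  have hdvd₂₃ : f₂ * f₃ ∣ X ^ n - 1 := Dvd.intro_left f₁ hprod'
  rw [hdual, hcode, image2_ofPairVec_eq_iff (zero_mem_cyclicCode _) (zero_mem_cyclicCode _)
      (zero_mem_cyclicCode _) (zero_mem_cyclicCode _),
    cyclicCode_inj hpos (h₁.mul h₂) (reverse_monic_of_dvd_X_pow_sub_one hpos hdvd₂₃)
      (Dvd.intro f₃ hprod) (reverse_dvd_X_pow_sub_one hdvd₂₃),
    cyclicCode_inj hpos h₁ (reverse_monic_of_dvd_X_pow_sub_one hpos hdvd₃)
      (Dvd.intro _ hprod') (reverse_dvd_X_pow_sub_one hdvd₃), reverse_mul_of_domain]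
  constructor
  · rintro ⟨h₁₂, h₁₃⟩
    refine ⟨h₁₃, mul_left_cancel₀ h₁.ne_zero ?_⟩
    rw [h₁₂, h₁₃, mul_comm]
  · rintro ⟨h₁₃, h₂₂⟩
    exact ⟨by rw [h₁₃, ← h₂₂, mul_comm], h₁₃⟩

/-- The cyclic code `C = (f₁f₂, w·f₁f₃)` of odd length `n` over `S`, where
`f₁f₂f₃ = Yⁿ - 1`, is self-dual if and only if `f₁ = f̂₃` and `f₂ = f̂₂`. -/
theorem selfDual_iff_reciprocal (n : ℕ) (hodd : Odd n) (hpos : 0 < n)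
    (f₁ f₂ f₃ : Polynomial (ZMod 2))
    (h₁ : f₁.Monic) (h₂ : f₂.Monic) (h₃ : f₃.Monic)
    (hprod : f₁ * f₂ * f₃ = X ^ n - 1) :
    cyclicCodeS n f₁ f₂ f₃ = dualCode n (cyclicCodeS n f₁ f₂ f₃) ↔
      f₁ = f₃.reverse ∧ f₂ = f₂.reverse :=
  selfDual_iff_reciprocal_general n hodd hpos f₁ f₂ f₃ h₁ h₂ hprod
end
end
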